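/- arXiv:2009.08485 — 2 statements merged into one kernel-verified Lean document; each statement's English description precedes it below -/
import Mathlib

section
/- Let d ≥ 2 and N ≥ 1 be integers with d = N + 1 and d prime. Let i, j be integers with 0 ≤ i < j ≤ N and let k be an integer not divisible by M̄. Then M̄ does not divide k·(u_j − u_i). (Equivalently, for any primitive M̄-th root of unity ζ and any 0 < k < M̄ one has ζ^{k·u_i} ≠ ζ^{k·u_j}, so the weights of the ℤ/M̄ℤ-action on ℙ^N at distinct coordinates are distinct for every nonzero group element.) -/
/-!
Write `x = 1 - d`, so that `u_n = ∑_{l<n} x^l` and `M̄ = u_d`. Then `u_j - u_i = x^i u_{j-i}`.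
The sum `M̄ = 1 + x·u_N` is coprime to `x`, and it is coprime to `u_m` for `0 < m < d`: modulo a
common prime factor `p`, `x^m = x^d = 1` forces `x = 1` as `gcd(m, d) = 1`, and then
`u_m = m`, `u_d = d` would both vanish in `ZMod p`, which is impossible as `gcd(m, d) = 1`.
Hence `M̄ ∣ k x^i u_{j-i}` gives `M̄ ∣ k`.
-/

open Finset

lemma geom_sum_add_sub_geom_sum {R : Type*} [CommRing R] (x : R) (i m : ℕ) :
    ∑ l ∈ range (i + m), x ^ l - ∑ l ∈ range i, x ^ l = x ^ i * ∑ l ∈ range m, x ^ l := by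
  rw [sum_range_add_sub_sum_range, mul_sum]
  simp only [pow_add]

lemma isCoprime_self_geom_sum_succ {R : Type*} [CommRing R] (x : R) (n : ℕ) :
    IsCoprime x (∑ l ∈ range (n + 1), x ^ l) :=
  ⟨-∑ l ∈ range n, x ^ l, 1, by rw [geom_sum_succ]; ring⟩

lemma pow_eq_one_of_geom_sum_eq_zero {R : Type*} [CommRing R] {y : R} {n : ℕ}
    (h : ∑ l ∈ range n, y ^ l = 0) : y ^ n = 1 := by
  rw [← sub_eq_zero, ← geom_sum_mul, h, zero_mul]

lemma not_geom_sum_eq_zero_and_geom_sum_eq_zero {R : Type*} [CommRing R] [Nontrivial R] (y : R)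
    {m n : ℕ} (hmn : m.Coprime n) :
    ¬ (∑ l ∈ range m, y ^ l = 0 ∧ ∑ l ∈ range n, y ^ l = 0) := by
  rintro ⟨hm, hn⟩
  have hy : y = 1 := (pow_eq_one_iff_of_coprime hmn).1
    ⟨pow_eq_one_of_geom_sum_eq_zero hm, pow_eq_one_of_geom_sum_eq_zero hn⟩
  have hcop : IsCoprime (m : R) (n : R) := by
    simpa using (Nat.isCoprime_iff_coprime.2 hmn).map (Int.castRingHom R)
  simp only [hy, one_pow, sum_const, card_range, nsmul_one] at hm hn
  rw [hm, hn, isCoprime_zero_left] at hcop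
  exact not_isUnit_zero hcop

lemma Int.isCoprime_geom_sum_of_coprime (x : ℤ) {m n : ℕ} (hmn : m.Coprime n) :
    IsCoprime (∑ l ∈ Finset.range m, x ^ l) (∑ l ∈ Finset.range n, x ^ l) := by
  rw [Int.isCoprime_iff_gcd_eq_one]
  by_contra h
  obtain ⟨p, hp, hpdvd⟩ := Nat.exists_prime_and_dvd h
  have : Fact p.Prime := ⟨hp⟩
  have vanish {k : ℕ} (hk : (p : ℤ) ∣ ∑ l ∈ Finset.range k, x ^ l) :
      ∑ l ∈ Finset.range k, (x : ZMod p) ^ l = 0 := by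
    exact_mod_cast (ZMod.intCast_zmod_eq_zero_iff_dvd _ p).2 hk
  exact not_geom_sum_eq_zero_and_geom_sum_eq_zero (x : ZMod p) hmn
    ⟨vanish ((Int.natCast_dvd_natCast.2 hpdvd).trans (Int.gcd_dvd_left _ _)),
     vanish ((Int.natCast_dvd_natCast.2 hpdvd).trans (Int.gcd_dvd_right _ _))⟩

theorem loop_weights_distinct_general (d N : ℕ) (hdN : d = N + 1)
    (hp : Nat.Prime d) (i j : ℕ) (hij : i < j) (hjN : j ≤ N) (k : ℤ)
    (hk : ¬ (∑ l ∈ Finset.range (N + 1), (1 - (d : ℤ)) ^ l) ∣ k) :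
    ¬ (∑ l ∈ Finset.range (N + 1), (1 - (d : ℤ)) ^ l) ∣
      k * ((∑ l ∈ Finset.range j, (1 - (d : ℤ)) ^ l)
        - ∑ l ∈ Finset.range i, (1 - (d : ℤ)) ^ l) := by
  obtain ⟨m, rfl⟩ : ∃ m, j = i + m := ⟨j - i, by omega⟩
  set x : ℤ := 1 - d
  rw [geom_sum_add_sub_geom_sum]
  have hcop_pow : IsCoprime (∑ l ∈ range (N + 1), x ^ l) (x ^ i) :=
    (isCoprime_self_geom_sum_succ x N).symm.pow_right
  have hcop_sum : IsCoprime (∑ l ∈ range (N + 1), x ^ l) (∑ l ∈ range m, x ^ l) := by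
    rw [← hdN]
    exact Int.isCoprime_geom_sum_of_coprime x
      (hp.coprime_iff_not_dvd.2 (Nat.not_dvd_of_pos_of_lt (by omega) (by omega)))
  exact fun hdvd => hk ((hcop_pow.mul_right hcop_sum).dvd_of_dvd_mul_right hdvd)

/-- For `d = N + 1` prime, `0 ≤ i < j ≤ N`, and `k` not divisible by `M̄`, the integer `M̄` does
not divide `k · (u_j - u_i)`: the weights of the action at distinct coordinates are distinct for
every nonzero group element. -/
theorem loop_weights_distinct (d N : ℕ) (hd : 2 ≤ d) (hN : 1 ≤ N) (hdN : d = N + 1)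
    (hp : Nat.Prime d) (i j : ℕ) (hij : i < j) (hjN : j ≤ N) (k : ℤ)
    (hk : ¬ (∑ l ∈ Finset.range (N + 1), (1 - (d : ℤ)) ^ l) ∣ k) :
    ¬ (∑ l ∈ Finset.range (N + 1), (1 - (d : ℤ)) ^ l) ∣
      k * ((∑ l ∈ Finset.range j, (1 - (d : ℤ)) ^ l)
        - ∑ l ∈ Finset.range i, (1 - (d : ℤ)) ^ l) :=
  loop_weights_distinct_general d N hdN hp i j hij hjN k hk
end

section
/- Let d ≥ 2 and N ≥ 1 be integers with d = N + 1 and d prime, let ζ ∈ ℂ be a primitive M̄-th root of unity, and let k be an integer not divisible by M̄. Let v : Fin (N+1) → ℂ be not identically zero and satisfy the loop hypersurface equation ∑_{j ∈ Fin(N+1)} v_j^{d−1} · v_{j+1} = 0 (index j+1 cyclic in Fin (N+1)). Then there exists λ ∈ ℂ with ζ^{k·u_i} · v_i = λ · v_i for every i if and only if there exists an index i₀ such that v_j = 0 for all j ≠ i₀. Moreover every such coordinate vector does satisfy the loop hypersurface equation, so the fixed locus of every nonzero group element acting on the loop hypersurface X ⊂ ℙ^N consists exactly of the N+1 coordinate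 points, and coincides with the fixed locus on the ambient ℙ^N. -/
/-!
The generator acts on the `i`-th coordinate by `ζ ^ (k * u_i)`, so the statement reduces to these
eigenvalues being pairwise distinct. With `t = 1 - d` the `u_i` are base-`t` repunits and
`u_b - u_a = t ^ a * u_(b - a)`. Since `(1 - t) * M̄ = 1 - t ^ (N + 1)`, `M̄` is coprime to `t`;
since repunits of coprime lengths are coprime (Euclid's algorithm on
`u_(m + n) = u_m + t ^ m * u_n`) and `N + 1` is prime, `M̄` is coprime to `u_(b - a)`.
So `ζ ^ (k * u_a) = ζ ^ (k * u_b)` forces `M̄ ∣ k`.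
-/

open Finset

section GeomSum

variable {R : Type*} [CommRing R] (t : R)

theorem geom_sum_add (m n : ℕ) :
    ∑ i ∈ range (m + n), t ^ i = ∑ i ∈ range m, t ^ i + t ^ m * ∑ i ∈ range n, t ^ i := by
  simp only [sum_range_add, mul_sum, pow_add]

theorem isCoprime_pow_geom_sum (m : ℕ) : IsCoprime (t ^ m) (∑ i ∈ range m, t ^ i) :=
  ⟨1, 1 - t, by rw [mul_neg_geom_sum]; ring⟩

theorem isCoprime_geom_sum_pow {m : ℕ} (hm : m ≠ 0) (n : ℕ) :
    IsCoprime (∑ i ∈ range m, t ^ i) (t ^ n) :=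
  ((IsCoprime.pow_left_iff (Nat.pos_of_ne_zero hm)).mp (isCoprime_pow_geom_sum t m)).pow_left.symm

theorem isCoprime_geom_sum_add_iff (m n : ℕ) :
    IsCoprime (∑ i ∈ range m, t ^ i) (∑ i ∈ range (m + n), t ^ i) ↔
      IsCoprime (∑ i ∈ range m, t ^ i) (∑ i ∈ range n, t ^ i) := by
  rcases eq_or_ne m 0 with rfl | hm
  · simp
  have h := IsCoprime.add_mul_left_right_iff (x := ∑ i ∈ range m, t ^ i)
    (y := t ^ m * ∑ i ∈ range n, t ^ i) (z := 1)
  rw [mul_one, add_comm] at h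
  rw [geom_sum_add, h, IsCoprime.mul_right_iff, and_iff_right (isCoprime_geom_sum_pow t hm m)]

theorem isCoprime_geom_sum_of_coprime {m n : ℕ} (h : m.Coprime n) :
    IsCoprime (∑ i ∈ range m, t ^ i) (∑ i ∈ range n, t ^ i) := by
  rcases Nat.eq_zero_or_pos m with rfl | hm
  · simp [(Nat.coprime_zero_left n).mp h, isCoprime_one_right]
  rcases Nat.eq_zero_or_pos n with rfl | hn
  · simp [(Nat.coprime_zero_right m).mp h, isCoprime_one_left]
  rcases le_total m n with hmn | hnm
  · obtain ⟨r, rfl⟩ := Nat.exists_eq_add_of_le hmn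
    exact (isCoprime_geom_sum_add_iff t m r).mpr
      (isCoprime_geom_sum_of_coprime (Nat.coprime_self_add_right.mp h))
  · obtain ⟨r, rfl⟩ := Nat.exists_eq_add_of_le hnm
    exact ((isCoprime_geom_sum_add_iff t n r).mpr
      (isCoprime_geom_sum_of_coprime (Nat.coprime_self_add_right.mp h.symm))).symm
termination_by m + n

end GeomSum

theorem IsPrimitiveRoot.zpow_eq_zpow_iff {G₀ : Type*} [CommGroupWithZero G₀] {ζ : G₀} {n : ℕ}
    (h : IsPrimitiveRoot ζ n) (hζ : ζ ≠ 0) {x y : ℤ} : ζ ^ x = ζ ^ y ↔ (n : ℤ) ∣ x - y := by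
  rw [← h.zpow_eq_one_iff_dvd, zpow_sub₀ hζ, div_eq_one_iff_eq (zpow_ne_zero y hζ)]

theorem sum_pow_mul_add_one_eq_zero_of_forall_ne_eq_zero {R : Type*} [Semiring R] {n e : ℕ}
    (hn : n ≠ 0) (he : e ≠ 0) {w : Fin (n + 1) → R} {i₀ : Fin (n + 1)}
    (hw : ∀ j, j ≠ i₀ → w j = 0) : ∑ j, w j ^ e * w (j + 1) = 0 := by
  refine sum_eq_zero fun j _ => ?_
  by_cases hj : j = i₀
  · subst hj
    rw [hw (j + 1) (by simpa [add_eq_left, Fin.one_eq_zero_iff] using hn), mul_zero]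
  · rw [hw j hj, zero_pow he, zero_mul]

theorem exists_forall_mul_eq_mul_iff_of_injective {ι M₀ : Type*} [Nonempty ι]
    [MulZeroClass M₀] [IsRightCancelMulZero M₀] {c : ι → M₀} (hc : Function.Injective c)
    (v : ι → M₀) :
    (∃ lam, ∀ i, c i * v i = lam * v i) ↔ ∃ i₀, ∀ j, j ≠ i₀ → v j = 0 := by
  constructor
  · rintro ⟨lam, h⟩
    by_contra! H
    obtain ⟨i, -, hi⟩ := H (Classical.arbitrary ι)
    obtain ⟨j, hji, hj⟩ := H i
    exact hji (hc (((mul_left_inj' hj).mp (h j)).trans ((mul_left_inj' hi).mp (h i)).symm))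
  · rintro ⟨i₀, h⟩
    refine ⟨c i₀, fun i => ?_⟩
    obtain rfl | hi := eq_or_ne i i₀
    · rfl
    · rw [h i hi, mul_zero, mul_zero]

theorem injective_zpow_mul_geom_sum {K : Type*} [Field K] {t k : ℤ} {p : ℕ} (hp : p.Prime)
    {ζ : K} (hζ : IsPrimitiveRoot ζ (∑ l ∈ range p, t ^ l).natAbs)
    (hk : ¬ (∑ l ∈ range p, t ^ l) ∣ k) :
    Function.Injective fun i : Fin p => ζ ^ (k * ∑ l ∈ range i, t ^ l) := by
  refine Function.Injective.of_lt_imp_ne fun a b hab heq => hk ?_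
  obtain ⟨r, hr⟩ := Nat.exists_eq_add_of_lt (Fin.lt_def.mp hab)
  have hcop : IsCoprime (∑ l ∈ range p, t ^ l) (t ^ (a : ℕ) * ∑ l ∈ range (r + 1), t ^ l) :=
    (isCoprime_geom_sum_pow t hp.ne_zero a).mul_right <| isCoprime_geom_sum_of_coprime t <|
      hp.coprime_iff_not_dvd.mpr (Nat.not_dvd_of_pos_of_lt r.succ_pos (by omega))
  refine hcop.dvd_of_dvd_mul_right ?_
  have hdiff : k * ∑ l ∈ range b, t ^ l - k * ∑ l ∈ range a, t ^ l =
      k * (t ^ (a : ℕ) * ∑ l ∈ range (r + 1), t ^ l) := by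
    rw [hr, add_assoc, geom_sum_add]; ring
  rw [← hdiff]
  rcases eq_or_ne ζ 0 with rfl | hζ0
  -- The repunit vanishes only for `t = -1`, `p = 2`; then `ζ = 0` is allowed and `zpow`
  -- cannot be cancelled.
  · have hM : ∑ l ∈ range p, t ^ l = 0 := Int.natAbs_eq_zero.mp (hζ.unique IsPrimitiveRoot.zero)
    obtain rfl : p = 2 := hp.even_iff.mp ((geom_sum_eq_zero_iff_neg_one hp.ne_zero).mp hM).2
    have ha : (a : ℕ) = 0 := by omega
    have hb : (b : ℕ) = 1 := by omega
    obtain rfl : k = 0 := by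
      by_contra hk0
      simp [ha, hb, zero_zpow k hk0] at heq
    simp
  · exact Int.natAbs_dvd.mp ((hζ.zpow_eq_zpow_iff hζ0).mp heq.symm)

theorem fixed_locus_loop_hypersurface_general (d N : ℕ)
    (hdN : d = N + 1) (hp : Nat.Prime d) (ζ : ℂ)
    (hζ : IsPrimitiveRoot ζ (∑ l ∈ Finset.range (N + 1), (1 - (d : ℤ)) ^ l).natAbs)
    (k : ℤ)
    (hk : ¬ (((∑ l ∈ Finset.range (N + 1), (1 - (d : ℤ)) ^ l).natAbs : ℤ) ∣ k))
    (v : Fin (N + 1) → ℂ) :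
    ((∃ lam : ℂ, ∀ i : Fin (N + 1),
        ζ ^ (k * ∑ l ∈ Finset.range (i : ℕ), (1 - (d : ℤ)) ^ l) * v i = lam * v i) ↔
      ∃ i₀ : Fin (N + 1), ∀ j : Fin (N + 1), j ≠ i₀ → v j = 0) ∧
    (∀ (w : Fin (N + 1) → ℂ) (i₀ : Fin (N + 1)), (∀ j : Fin (N + 1), j ≠ i₀ → w j = 0) →
      ∑ j : Fin (N + 1), w j ^ (d - 1) * w (j + 1) = 0) := by
  subst hdN
  have hN : N ≠ 0 := by have := hp.two_le; omega
  rw [Int.natAbs_dvd] at hk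
  exact ⟨exists_forall_mul_eq_mul_iff_of_injective (injective_zpow_mul_geom_sum hp hζ hk) v,
    fun w i₀ hw => sum_pow_mul_add_one_eq_zero_of_forall_ne_eq_zero hN (by omega) hw⟩

/-- For `d = N + 1` prime, `ζ` a primitive `M̄`-th root of unity and `k` not divisible by `M̄`:
a nonzero vector `v` on the loop hypersurface is an eigenvector of the diagonal map with
entries `ζ^{k·u_i}` iff it is supported at a single coordinate; moreover every vector supported
at a single coordinate satisfies the loop hypersurface equation, so the fixed locus on the
hypersurface consists exactly of the coordinate points and agrees with that on `ℙ^N`. -/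
theorem fixed_locus_loop_hypersurface (d N : ℕ) (hd : 2 ≤ d) (hN : 1 ≤ N)
    (hdN : d = N + 1) (hp : Nat.Prime d) (ζ : ℂ)
    (hζ : IsPrimitiveRoot ζ (∑ l ∈ Finset.range (N + 1), (1 - (d : ℤ)) ^ l).natAbs)
    (k : ℤ)
    (hk : ¬ (((∑ l ∈ Finset.range (N + 1), (1 - (d : ℤ)) ^ l).natAbs : ℤ) ∣ k))
    (v : Fin (N + 1) → ℂ) (hv : v ≠ 0)
    (hX : ∑ j : Fin (N + 1), v j ^ (d - 1) * v (j + 1) = 0) :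
    ((∃ lam : ℂ, ∀ i : Fin (N + 1),
        ζ ^ (k * ∑ l ∈ Finset.range (i : ℕ), (1 - (d : ℤ)) ^ l) * v i = lam * v i) ↔
      ∃ i₀ : Fin (N + 1), ∀ j : Fin (N + 1), j ≠ i₀ → v j = 0) ∧
    (∀ (w : Fin (N + 1) → ℂ) (i₀ : Fin (N + 1)), (∀ j : Fin (N + 1), j ≠ i₀ → w j = 0) →
      ∑ j : Fin (N + 1), w j ^ (d - 1) * w (j + 1) = 0) :=
  fixed_locus_loop_hypersurface_general d N hdN hp ζ hζ k hk v
end
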